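/- arXiv:1310.3213 — 3 statements merged into one kernel-verified Lean document; each statement's English description precedes it below -/
import Mathlib

section
/- Let a, b be complex numbers with positive real parts. Then P_{a,b}(g) := (1/(Γ(a)Γ(b))) ∫_{-1}^{1}(1-s)^{a-1}(1+s)^{b-1} g(s) ds vanishes for every polynomial g if and only if both -a and -b are natural numbers; in particular, since the formula for P_{a,b}(g) extends to an entire function of (a,b) for each polynomial g, the common zero set of all P_{·,·}(g_{l1,l2}) over l1, l2 ∈ ℕ equals {(a,b) : a ∈ -ℕ and b ∈ -ℕ}. -/
/-- The holomorphic extension of the normalized Beta-type integral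
`P_{a,b}(g_{l1,l2})`. -/
noncomputable def Pab (a b : ℂ) (l1 l2 : ℕ) : ℂ :=
  (2 : ℂ) ^ (a + b + l1 + l2 - 1) / Complex.Gamma (a + b + l1 + l2) *
    (∏ i ∈ Finset.range l1, (a + i)) * ∏ j ∈ Finset.range l2, (b + j)

theorem stmt_1 (a b : ℂ) :
    (∀ l1 l2 : ℕ, Pab a b l1 l2 = 0) ↔
      ((∃ i : ℕ, a = -(i : ℂ)) ∧ ∃ j : ℕ, b = -(j : ℂ)) := by
  constructor
  · intro h
    obtain ⟨N, hN⟩ : ∃ N : ℕ, 0 < (a + b).re + N := by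
      obtain ⟨N, hN⟩ := exists_nat_gt (-(a + b).re)
      exact ⟨N, by linarith⟩
    have h2 : ∀ w : ℂ, (2 : ℂ) ^ w ≠ 0 := fun w => by
      simp [Complex.cpow_eq_zero_iff]
    constructor
    · have h0 := h N 0
      unfold Pab at h0
      simp only [Finset.range_zero, Finset.prod_empty, mul_one, Nat.cast_zero,
        add_zero] at h0
      have hG : Complex.Gamma (a + b + N) ≠ 0 :=
        Complex.Gamma_ne_zero_of_re_pos (by simpa using hN)
      rcases mul_eq_zero.mp h0 with h' | h'
      · exact absurd h' (div_ne_zero (h2 _) hG)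
      · obtain ⟨i, -, hi⟩ := Finset.prod_eq_zero_iff.mp h'
        exact ⟨i, by linear_combination hi⟩
    · have h0 := h 0 N
      unfold Pab at h0
      simp only [Finset.range_zero, Finset.prod_empty, mul_one, one_mul,
        Nat.cast_zero, add_zero] at h0
      have hG : Complex.Gamma (a + b + 0 + N) ≠ 0 :=
        Complex.Gamma_ne_zero_of_re_pos (by simpa using hN)
      rcases mul_eq_zero.mp h0 with h' | h'
      · rcases mul_eq_zero.mp h' with h'' | h''
        · exact absurd h'' (h2 _)
        · exact absurd (inv_eq_zero.mp h'') (by simpa using hG)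
      · obtain ⟨j, -, hj⟩ := Finset.prod_eq_zero_iff.mp h'
        exact ⟨j, by linear_combination hj⟩
  · rintro ⟨⟨i, rfl⟩, ⟨j, rfl⟩⟩ l1 l2
    unfold Pab
    by_cases h1 : i < l1
    · have : ∏ k ∈ Finset.range l1, (-(i : ℂ) + k) = 0 :=
        Finset.prod_eq_zero (Finset.mem_range.mpr h1) (by simp)
      rw [this]; ring
    · by_cases h2 : j < l2
      · have : ∏ k ∈ Finset.range l2, (-(j : ℂ) + k) = 0 :=
          Finset.prod_eq_zero (Finset.mem_range.mpr h2) (by simp)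
        rw [this]; ring
      · push_neg at h1 h2
        have : -(i : ℂ) + -(j : ℂ) + l1 + l2 = -((((i - l1) + (j - l2)) : ℕ) : ℂ) := by
          push_cast [Nat.cast_sub h1, Nat.cast_sub h2]
          ring
        rw [this, Complex.Gamma_neg_nat_eq_zero, div_zero, zero_mul, zero_mul]
end

section
/- For real ν ≪ 0 (or complex ν with this formula interpreted via falling factorials), the i-th partial derivative with respect to x_n of (|x|² + x_n²)^{-ν} restricted to x_n = 0 equals 0 if i = 2j+1 is odd, and equals (-1)^j (2j)! Γ(ν+j)/(j! Γ(ν)) · |x|^{-2ν-2j} if i = 2j is even, for x ∈ ℝ^{n-1} with x ≠ 0. -/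
/-!
Put `a = |x|²` and `f t = (a + t²)^(-ν)`. Then `(a + t²) f' = -2ν t f`, and differentiating this
identity `k + 1` times at `t = 0` by the Leibniz rule (only the derivatives of `t` and `t²` of
order one and two survive at `0`) gives the recurrence
`a f⁽ᵏ⁺²⁾(0) = -(k + 1)(k + 2ν) f⁽ᵏ⁾(0)`. Since `f'(0) = 0` and `f(0) = a^(-ν)`, induction on `j`
gives both formulas.
-/

open Complex
open scoped ContDiff

section
variable {𝕜 F : Type*} [NontriviallyNormedField 𝕜] [NormedAddCommGroup F] [NormedSpace 𝕜 F]

theorem iteratedDeriv_pow_smul_zero {g : 𝕜 → F} {n : ℕ} (hg : ContDiffAt 𝕜 n g 0) (m : ℕ) :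
    iteratedDeriv n (fun t => t ^ m • g t) 0 =
      n.descFactorial m • iteratedDeriv (n - m) g 0 := by
  have h := iteratedDerivWithin_smul (Set.mem_univ (0 : 𝕜)) uniqueDiffOn_univ
    (f := fun t : 𝕜 => t ^ m) (contDiff_id.pow m).contDiffWithinAt hg.contDiffWithinAt
  simp only [iteratedDerivWithin_univ, iteratedDeriv_fun_pow_zero, ite_smul, zero_smul,
    smul_ite, smul_zero, Finset.sum_ite_eq', Finset.mem_range, Nat.cast_smul_eq_nsmul] at h
  refine h.trans ?_
  split_ifs with hm
  · rw [Nat.descFactorial_eq_factorial_mul_choose, mul_comm, mul_smul]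
  · rw [Nat.descFactorial_eq_zero_iff_lt.mpr (by omega), zero_smul]
end

section
variable {a : ℝ}

theorem ofReal_add_sq_cpow_eq_cexp (ha : 0 < a) (w : ℂ) (t : ℝ) :
    ((a + t ^ 2 : ℝ) : ℂ) ^ w = exp (Real.log (a + t ^ 2) * w) := by
  have hpos : 0 < a + t ^ 2 := by positivity
  rw [cpow_def_of_ne_zero (ofReal_ne_zero.mpr hpos.ne'), ofReal_log hpos.le]

theorem contDiff_ofReal_add_sq_cpow (ha : 0 < a) (w : ℂ) :
    ContDiff ℝ ∞ (fun t : ℝ => ((a + t ^ 2 : ℝ) : ℂ) ^ w) := by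
  simp_rw [ofReal_add_sq_cpow_eq_cexp ha]
  have hlog : ContDiff ℝ ∞ (fun t : ℝ => Real.log (a + t ^ 2)) :=
    (contDiff_const.add (contDiff_id.pow 2)).log fun t => by positivity
  exact ((ofRealCLM.contDiff.comp hlog).mul contDiff_const).cexp

theorem hasDerivAt_ofReal_add_sq_cpow (ha : 0 < a) (w : ℂ) (t : ℝ) :
    HasDerivAt (fun t : ℝ => ((a + t ^ 2 : ℝ) : ℂ) ^ w)
      (w * ((a + t ^ 2 : ℝ) : ℂ) ^ (w - 1) * (2 * t)) t := by
  have hslit : ((a + t ^ 2 : ℝ) : ℂ) ∈ slitPlane := ofReal_mem_slitPlane.mpr (by positivity)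
  have hbase : HasDerivAt (fun z : ℂ => a + z ^ 2) (2 * t) (t : ℂ) := by
    simpa using (hasDerivAt_pow 2 (t : ℂ)).const_add (a : ℂ)
  have := (hbase.cpow_const (c := w) (by exact_mod_cast hslit)).comp_ofReal
  push_cast
  exact this

theorem ofReal_add_sq_mul_deriv_cpow (ha : 0 < a) (w : ℂ) (t : ℝ) :
    ((a + t ^ 2 : ℝ) : ℂ) * deriv (fun t : ℝ => ((a + t ^ 2 : ℝ) : ℂ) ^ w) t =
      2 * w * t * ((a + t ^ 2 : ℝ) : ℂ) ^ w := by
  have hne : ((a + t ^ 2 : ℝ) : ℂ) ≠ 0 := ofReal_ne_zero.mpr (by positivity)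
  rw [(hasDerivAt_ofReal_add_sq_cpow ha w t).deriv, cpow_sub _ _ hne, cpow_one]
  field_simp

theorem iteratedDeriv_add_two_ofReal_add_sq_cpow_zero (ha : 0 < a) (ν : ℂ) (k : ℕ) :
    a * iteratedDeriv (k + 2) (fun t : ℝ => ((a + t ^ 2 : ℝ) : ℂ) ^ (-ν)) 0 =
      -((k + 1) * (k + 2 * ν)) *
        iteratedDeriv k (fun t : ℝ => ((a + t ^ 2 : ℝ) : ℂ) ^ (-ν)) 0 := by
  set f := fun t : ℝ => ((a + t ^ 2 : ℝ) : ℂ) ^ (-ν)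
  have hf : ContDiff ℝ ∞ f := contDiff_ofReal_add_sq_cpow ha (-ν)
  have hf' : ContDiff ℝ ∞ (deriv f) := (contDiff_infty_iff_deriv.mp hf).2
  have hode : (fun t : ℝ => (a : ℂ) * deriv f t + t ^ 2 • deriv f t) =
      fun t : ℝ => (-2 * ν) * (t ^ 1 • f t) := by
    funext t
    have h : ((a + t ^ 2 : ℝ) : ℂ) * deriv f t = 2 * -ν * t * f t :=
      ofReal_add_sq_mul_deriv_cpow ha (-ν) t
    rw [real_smul, real_smul, ofReal_pow, pow_one]
    push_cast at h
    linear_combination h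
  have hsmooth : ∀ {g : ℝ → ℂ}, ContDiff ℝ ∞ g → ContDiffAt ℝ (k + 1 : ℕ) g 0 :=
    fun hg => hg.contDiffAt.of_le (by exact_mod_cast le_top)
  have key := congrFun (congrArg (iteratedDeriv (k + 1)) hode) 0
  rw [iteratedDeriv_fun_add (hsmooth (contDiff_const.mul hf'))
      (hsmooth (g := fun t : ℝ => t ^ 2 • deriv f t) ((contDiff_id.pow 2).smul hf')),
    iteratedDeriv_const_mul _ (hsmooth hf'), iteratedDeriv_pow_smul_zero (hsmooth hf'),
    iteratedDeriv_const_mul _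
      (hsmooth (g := fun t : ℝ => t ^ 1 • f t) ((contDiff_id.pow 1).smul hf)),
    iteratedDeriv_pow_smul_zero (hsmooth hf), ← iteratedDeriv_succ'] at key
  have hsecond : (k + 1).descFactorial 2 • iteratedDeriv (k + 1 - 2) (deriv f) 0 =
      ((k + 1) * k : ℂ) * iteratedDeriv k f 0 := by
    cases k with
    | zero => simp
    | succ k =>
      rw [← Nat.cast_smul_eq_nsmul ℂ, smul_eq_mul, Nat.add_sub_add_right, ← iteratedDeriv_succ']
      simp only [Nat.descFactorial_succ, Nat.descFactorial_zero]
      push_cast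
      ring
  rw [hsecond, Nat.descFactorial_one, Nat.add_sub_cancel, ← Nat.cast_smul_eq_nsmul ℂ,
    smul_eq_mul] at key
  push_cast at key
  linear_combination key

theorem iteratedDeriv_odd_ofReal_add_sq_cpow_zero (ha : 0 < a) (ν : ℂ) (j : ℕ) :
    iteratedDeriv (2 * j + 1) (fun t : ℝ => ((a + t ^ 2 : ℝ) : ℂ) ^ (-ν)) 0 = 0 := by
  induction j with
  | zero =>
    rw [mul_zero, zero_add, iteratedDeriv_one, (hasDerivAt_ofReal_add_sq_cpow ha (-ν) 0).deriv]
    simp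
  | succ j ih =>
    have h := iteratedDeriv_add_two_ofReal_add_sq_cpow_zero ha ν (2 * j + 1)
    rw [ih, mul_zero] at h
    exact (mul_eq_zero.mp h).resolve_left (ofReal_ne_zero.mpr ha.ne')

theorem iteratedDeriv_even_ofReal_add_sq_cpow_zero (ha : 0 < a) (ν : ℂ) (j : ℕ) :
    iteratedDeriv (2 * j) (fun t : ℝ => ((a + t ^ 2 : ℝ) : ℂ) ^ (-ν)) 0 =
      (-1) ^ j * (((2 * j).factorial : ℂ) / (j.factorial : ℂ)) *
        (∏ k ∈ Finset.range j, (ν + k)) * (a : ℂ) ^ (-ν - j) := by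
  have hane : (a : ℂ) ≠ 0 := ofReal_ne_zero.mpr ha.ne'
  induction j with
  | zero => simp
  | succ j ih =>
    apply mul_left_cancel₀ hane
    rw [show 2 * (j + 1) = 2 * j + 2 by ring, iteratedDeriv_add_two_ofReal_add_sq_cpow_zero ha,
      ih, Finset.prod_range_succ, show 2 * j + 2 = (2 * j + 1) + 1 by ring,
      Nat.factorial_succ, Nat.factorial_succ, Nat.factorial_succ,
      show -ν - ((j + 1 : ℕ) : ℂ) = (-ν - j) - 1 by push_cast; ring, cpow_sub (-ν - j) 1 hane,
      cpow_one]
    push_cast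
    field_simp
    ring

end

theorem ofReal_sq_cpow {r : ℝ} (hr : 0 ≤ r) (w : ℂ) :
    ((r ^ 2 : ℝ) : ℂ) ^ w = (r : ℂ) ^ (2 * w) := by
  have harg : (r : ℂ).arg = 0 := arg_ofReal_of_nonneg hr
  rw [cpow_ofNat_mul' (by simp [harg, Real.pi_pos]) (by simp [harg, Real.pi_pos.le]), ofReal_pow]

theorem stmt_3_general (n : ℕ) (ν : ℂ)
    (x : EuclideanSpace ℝ (Fin (n - 1))) (hx : x ≠ 0) (j : ℕ) :
    iteratedDeriv (2 * j + 1)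
        (fun t : ℝ => ((‖x‖ ^ 2 + t ^ 2 : ℝ) : ℂ) ^ (-ν)) 0 = 0 ∧
    iteratedDeriv (2 * j)
        (fun t : ℝ => ((‖x‖ ^ 2 + t ^ 2 : ℝ) : ℂ) ^ (-ν)) 0 =
      (-1) ^ j * (((2 * j).factorial : ℂ) / (j.factorial : ℂ)) *
        (∏ k ∈ Finset.range j, (ν + k)) * (‖x‖ : ℂ) ^ (-2 * ν - 2 * (j : ℂ)) := by
  have ha : 0 < ‖x‖ ^ 2 := pow_pos (norm_pos_iff.mpr hx) 2
  refine ⟨iteratedDeriv_odd_ofReal_add_sq_cpow_zero ha ν j, ?_⟩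
  rw [iteratedDeriv_even_ofReal_add_sq_cpow_zero ha, ofReal_sq_cpow (norm_nonneg x)]
  ring_nf

theorem stmt_3 (n : ℕ) (hn : 2 ≤ n) (ν : ℂ)
    (x : EuclideanSpace ℝ (Fin (n - 1))) (hx : x ≠ 0) (j : ℕ) :
    iteratedDeriv (2 * j + 1)
        (fun t : ℝ => ((‖x‖ ^ 2 + t ^ 2 : ℝ) : ℂ) ^ (-ν)) 0 = 0 ∧
    iteratedDeriv (2 * j)
        (fun t : ℝ => ((‖x‖ ^ 2 + t ^ 2 : ℝ) : ℂ) ^ (-ν)) 0 =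
      (-1) ^ j * (((2 * j).factorial : ℂ) / (j.factorial : ℂ)) *
        (∏ k ∈ Finset.range j, (ν + k)) * (‖x‖ : ℂ) ^ (-2 * ν - 2 * (j : ℂ)) :=
  stmt_3_general n ν x hx j
end

section
/- For n ≥ 2, j, l ∈ ℕ with j ≤ l, and μ = -λ with λ ∈ ℂ: Δ_{ℝ^{n-1}}^j (∂/∂x_n)^{2l-2j} (1 + |x|² + x_n²)^{-λ} evaluated at (x, x_n) = (0,0) equals (2^{2j}(2l-2j)!/(l-j)!) · (-λ-l+1)_l · ((n-1)/2)_j, where (a)_k denotes the Pochhammer symbol. -/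
/-- The Euclidean Laplacian `Δ = Σ ∂²/∂x_i²` of a complex-valued function on `ℝ^m`. -/
noncomputable def laplacianC (m : ℕ) (f : EuclideanSpace ℝ (Fin m) → ℂ)
    (x : EuclideanSpace ℝ (Fin m)) : ℂ :=
  ∑ i : Fin m,
    fderiv ℝ (fun y => fderiv ℝ f y (EuclideanSpace.single i (1 : ℝ))) x
      (EuclideanSpace.single i (1 : ℝ))

/-!
Both differential operators act on functions of a square through the one-variable operator
`L_m g = 4u g'' + 2m g'` (`radialLaplacian`): for `f x = g ‖x‖²` on `ℝ^m`, `Δf = (L_m g)(‖x‖²)`,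
and for `m = 1` this says `(d/dt)² g(t²) = (L_1 g)(t²)`. Since `(L_m g)' = L_{m+2} g'`, evaluating
at `0` gives `(L_m^j g)(0) = ∏_{i<j} (4i + 2m) · g⁽ʲ⁾(0)`. Applying this first in `t` (with
`m = 1`) and then in `x` (with `m = n - 1`) leaves the derivatives of `u ↦ (c + u)^(-λ)` at `0`,
which are falling factorials of `-λ` times powers of `c`.
-/

open Set Filter Topology Finset
open scoped ContDiff RealInnerProductSpace Nat

section radialLaplacian

variable {F : Type*} [NormedAddCommGroup F] [NormedSpace ℝ F] {s : Set ℝ} {g : ℝ → F}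

noncomputable def radialLaplacian (m : ℕ) (g : ℝ → F) (u : ℝ) : F :=
  (4 * u) • deriv (deriv g) u + (2 * m : ℝ) • deriv g u

theorem contDiffOn_radialLaplacian (hs : IsOpen s) (hg : ContDiffOn ℝ ∞ g s) (m : ℕ) :
    ContDiffOn ℝ ∞ (radialLaplacian m g) s := by
  have hg1 : ContDiffOn ℝ ∞ (deriv g) s := hg.deriv_of_isOpen hs (by simp)
  have hg2 : ContDiffOn ℝ ∞ (deriv (deriv g)) s := hg1.deriv_of_isOpen hs (by simp)
  exact ((contDiffOn_const.mul contDiffOn_id).smul hg2).add (contDiffOn_const.smul hg1)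

theorem deriv_radialLaplacian (hs : IsOpen s) (hg : ContDiffOn ℝ ∞ g s) (m : ℕ) :
    EqOn (deriv (radialLaplacian m g)) (radialLaplacian (m + 2) (deriv g)) s := by
  intro u hu
  have hg1 : ContDiffOn ℝ ∞ (deriv g) s := hg.deriv_of_isOpen hs (by simp)
  have hg2 : ContDiffOn ℝ ∞ (deriv (deriv g)) s := hg1.deriv_of_isOpen hs (by simp)
  have hd1 := ((hg1.differentiableOn (by simp)).differentiableAt (hs.mem_nhds hu)).hasDerivAt
  have hd2 := ((hg2.differentiableOn (by simp)).differentiableAt (hs.mem_nhds hu)).hasDerivAt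
  have h4u : HasDerivAt (fun u : ℝ => 4 * u) 4 u := by
    simpa using (hasDerivAt_id u).const_mul (4 : ℝ)
  have hL : HasDerivAt (radialLaplacian m g) ((4 * u) • deriv (deriv (deriv g)) u +
      (4 : ℝ) • deriv (deriv g) u + (2 * m : ℝ) • deriv (deriv g) u) u :=
    (h4u.smul hd2).add (hd1.const_smul (2 * m : ℝ))
  rw [hL.deriv, radialLaplacian]
  push_cast
  module

theorem iteratedDeriv_radialLaplacian (hs : IsOpen s) (hg : ContDiffOn ℝ ∞ g s) (m j : ℕ) :
    EqOn (iteratedDeriv j (radialLaplacian m g))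
      (radialLaplacian (m + 2 * j) (iteratedDeriv j g)) s := by
  induction j generalizing m g with
  | zero => intro u _; simp
  | succ j ih =>
    intro u hu
    rw [iteratedDeriv_succ', (deriv_radialLaplacian hs hg m).iteratedDeriv_of_isOpen hs j hu,
      ih (hg.deriv_of_isOpen hs (by simp)) (m + 2) hu, iteratedDeriv_succ',
      show m + 2 + 2 * j = m + 2 * (j + 1) by ring]

theorem radialLaplacian_iterate_apply_zero (hs : IsOpen s) (hs0 : 0 ∈ s)
    (hg : ContDiffOn ℝ ∞ g s) (m j : ℕ) :
    (radialLaplacian m)^[j] g 0 = (∏ i ∈ range j, (4 * i + 2 * m : ℝ)) • iteratedDeriv j g 0 := by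
  induction j generalizing g with
  | zero => simp
  | succ j ih =>
    rw [Function.iterate_succ_apply, ih (contDiffOn_radialLaplacian hs hg m),
      iteratedDeriv_radialLaplacian hs hg m j hs0, radialLaplacian, ← iteratedDeriv_succ,
      prod_range_succ]
    simp only [mul_zero, zero_smul, zero_add, smul_smul]
    push_cast
    congr 1
    ring

end radialLaplacian

section normSq

variable {E F : Type*} [NormedAddCommGroup E] [InnerProductSpace ℝ E]
  [NormedAddCommGroup F] [NormedSpace ℝ F] {g : ℝ → F} {x : E}

theorem hasFDerivAt_comp_normSq (hg : DifferentiableAt ℝ g (‖x‖ ^ 2)) :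
    HasFDerivAt (fun y : E => g (‖y‖ ^ 2))
      ((2 • innerSL ℝ x).smulRight (deriv g (‖x‖ ^ 2))) x := by
  have hq : HasFDerivAt (fun y : E => ‖y‖ ^ 2) (2 • innerSL ℝ x) x := by
    simpa using (hasFDerivAt_id x).norm_sq
  exact (hg.hasFDerivAt.comp x hq).congr_fderiv (by ext v; simp; module)

theorem fderiv_comp_normSq_apply (hg : DifferentiableAt ℝ g (‖x‖ ^ 2)) (v : E) :
    fderiv ℝ (fun y : E => g (‖y‖ ^ 2)) x v = (2 * ⟪x, v⟫) • deriv g (‖x‖ ^ 2) := by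
  simp [(hasFDerivAt_comp_normSq hg).fderiv]

theorem fderiv_fderiv_comp_normSq_apply
    (hg : ∀ᶠ y in 𝓝 x, DifferentiableAt ℝ g (‖y‖ ^ 2))
    (hg' : DifferentiableAt ℝ (deriv g) (‖x‖ ^ 2)) (v : E) :
    fderiv ℝ (fun y => fderiv ℝ (fun y : E => g (‖y‖ ^ 2)) y v) x v =
      (4 * ⟪x, v⟫ ^ 2) • deriv (deriv g) (‖x‖ ^ 2) + (2 * ‖v‖ ^ 2) • deriv g (‖x‖ ^ 2) := by
  have hfirst : (fun y => fderiv ℝ (fun y : E => g (‖y‖ ^ 2)) y v) =ᶠ[𝓝 x]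
      fun y => (2 * innerSL ℝ v y) • deriv g (‖y‖ ^ 2) := by
    filter_upwards [hg] with y hy
    rw [fderiv_comp_normSq_apply hy, innerSL_apply_apply, real_inner_comm]
  have hprod := (((innerSL ℝ v).hasFDerivAt (x := x)).const_mul 2).fun_smul
    (hasFDerivAt_comp_normSq hg')
  rw [hfirst.fderiv_eq, hprod.fderiv]
  simp [real_inner_comm, smul_smul]
  module

end normSq

section squares

variable {F : Type*} [NormedAddCommGroup F] [NormedSpace ℝ F] {s : Set ℝ} {g : ℝ → F}

theorem differentiableAt_and_deriv_of_contDiffOn_two (hs : IsOpen s) (hg : ContDiffOn ℝ 2 g s)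
    {u : ℝ} (hu : u ∈ s) : DifferentiableAt ℝ g u ∧ DifferentiableAt ℝ (deriv g) u :=
  ⟨(hg.differentiableOn (by simp)).differentiableAt (hs.mem_nhds hu),
    ((hg.deriv_of_isOpen hs (m := 1) (by norm_num)).differentiableOn (by simp)).differentiableAt
      (hs.mem_nhds hu)⟩

theorem deriv_deriv_comp_sq (hs : IsOpen s) (hs0 : Set.Ici 0 ⊆ s) (hg : ContDiffOn ℝ 2 g s) :
    deriv (deriv fun t => g (t ^ 2)) = fun t => radialLaplacian 1 g (t ^ 2) := by
  funext t
  have hd (r : ℝ) := differentiableAt_and_deriv_of_contDiffOn_two hs hg (hs0 (sq_nonneg r))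
  have h := fderiv_fderiv_comp_normSq_apply (.of_forall fun y => (hd ‖y‖).1) (hd ‖t‖).2 (1 : ℝ)
  simp only [Real.norm_eq_abs, sq_abs, fderiv_apply_one_eq_deriv] at h
  simp [h, radialLaplacian]

theorem iteratedDeriv_two_mul_comp_sq (hs : IsOpen s) (hs0 : Set.Ici 0 ⊆ s)
    (hg : ContDiffOn ℝ ∞ g s) (k : ℕ) :
    iteratedDeriv (2 * k) (fun t => g (t ^ 2)) = fun t => (radialLaplacian 1)^[k] g (t ^ 2) := by
  induction k generalizing g with
  | zero => simp
  | succ k ih =>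
    rw [show 2 * (k + 1) = 2 * k + 1 + 1 by ring, iteratedDeriv_succ', iteratedDeriv_succ',
      deriv_deriv_comp_sq hs hs0 (hg.of_le ENat.LEInfty.out),
      ih (contDiffOn_radialLaplacian hs hg 1), Function.iterate_succ_apply]

theorem iteratedDeriv_two_mul_comp_sq_apply_zero (hs : IsOpen s) (hs0 : Set.Ici 0 ⊆ s)
    (hg : ContDiffOn ℝ ∞ g s) (k : ℕ) :
    iteratedDeriv (2 * k) (fun t => g (t ^ 2)) 0 =
      (∏ i ∈ range k, (4 * i + 2 : ℝ)) • iteratedDeriv k g 0 := by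
  rw [iteratedDeriv_two_mul_comp_sq hs hs0 hg]
  beta_reduce
  rw [zero_pow two_ne_zero, radialLaplacian_iterate_apply_zero hs (hs0 self_mem_Ici) hg]
  norm_num

end squares

section laplacian

variable {s : Set ℝ} {g : ℝ → ℂ} {m : ℕ}

theorem laplacianC_comp_normSq (hs : IsOpen s) (hs0 : Set.Ici 0 ⊆ s) (hg : ContDiffOn ℝ 2 g s) :
    laplacianC m (fun y => g (‖y‖ ^ 2)) = fun x => radialLaplacian m g (‖x‖ ^ 2) := by
  funext x
  have hd (r : ℝ) := differentiableAt_and_deriv_of_contDiffOn_two hs hg (hs0 (sq_nonneg r))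
  simp only [laplacianC,
    fderiv_fderiv_comp_normSq_apply (.of_forall fun y => (hd ‖y‖).1) (hd ‖x‖).2,
    sum_add_distrib, ← sum_smul, EuclideanSpace.inner_single_right, PiLp.norm_single]
  simp only [one_mul, conj_trivial, norm_one, one_pow, mul_one, ← mul_sum,
    ← EuclideanSpace.real_norm_sq_eq, sum_const, card_univ, Fintype.card_fin, nsmul_eq_mul',
    radialLaplacian]

theorem laplacianC_iterate_comp_normSq (hs : IsOpen s) (hs0 : Set.Ici 0 ⊆ s)
    (hg : ContDiffOn ℝ ∞ g s) (j : ℕ) :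
    (laplacianC m)^[j] (fun y => g (‖y‖ ^ 2)) = fun x => (radialLaplacian m)^[j] g (‖x‖ ^ 2) := by
  induction j generalizing g with
  | zero => rfl
  | succ j ih =>
    rw [Function.iterate_succ_apply, Function.iterate_succ_apply,
      laplacianC_comp_normSq hs hs0 (hg.of_le ENat.LEInfty.out),
      ih (contDiffOn_radialLaplacian hs hg m)]

theorem laplacianC_iterate_comp_normSq_apply_zero (hs : IsOpen s) (hs0 : Set.Ici 0 ⊆ s)
    (hg : ContDiffOn ℝ ∞ g s) (j : ℕ) :
    (laplacianC m)^[j] (fun y => g (‖y‖ ^ 2)) 0 =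
      (∏ i ∈ range j, (4 * i + 2 * m : ℝ)) • iteratedDeriv j g 0 := by
  rw [laplacianC_iterate_comp_normSq hs hs0 hg]
  beta_reduce
  rw [norm_zero, zero_pow two_ne_zero,
    radialLaplacian_iterate_apply_zero hs (hs0 self_mem_Ici) hg]

end laplacian

section cpow

open Complex

theorem contDiffOn_ofReal_cpow (a : ℂ) : ContDiffOn ℝ ∞ (fun u : ℝ => (u : ℂ) ^ a) (Ioi 0) := by
  intro u hu
  have h : AnalyticAt ℂ (fun z : ℂ => z ^ a) u :=
    analyticAt_id.cpow analyticAt_const (ofReal_mem_slitPlane.2 hu)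
  exact ((h.contDiffAt.restrict_scalars ℝ).comp u ofRealCLM.contDiff.contDiffAt).contDiffWithinAt

theorem iteratedDeriv_ofReal_cpow {u : ℝ} (hu : 0 < u) (a : ℂ) (k : ℕ) :
    iteratedDeriv k (fun u : ℝ => (u : ℂ) ^ a) u =
      (∏ i ∈ range k, (a - i)) * (u : ℂ) ^ (a - k) := by
  induction k generalizing a with
  | zero => simp
  | succ k ih =>
    have hderiv : deriv (fun u : ℝ => (u : ℂ) ^ a) =ᶠ[𝓝 u] fun v => a * (v : ℂ) ^ (a - 1) := by
      filter_upwards [Ioi_mem_nhds hu] with v hv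
      exact (hasStrictDerivAt_cpow_const (ofReal_mem_slitPlane.2 hv)).hasDerivAt.comp_ofReal.deriv
    rw [iteratedDeriv_succ', hderiv.iteratedDeriv_eq, iteratedDeriv_const_mul_field, ih,
      prod_range_succ']
    push_cast
    simp only [sub_sub, add_comm (1 : ℂ)]
    ring

theorem contDiffOn_ofReal_const_add_cpow (c : ℝ) (a : ℂ) :
    ContDiffOn ℝ ∞ (fun u : ℝ => ((c + u : ℝ) : ℂ) ^ a) (Ioi (-c)) :=
  (contDiffOn_ofReal_cpow a).comp (contDiff_const.add contDiff_id).contDiffOn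
    fun u hu => by simp only [Set.mem_Ioi] at hu ⊢; linarith

theorem iteratedDeriv_ofReal_const_add_cpow {c : ℝ} (hc : 0 < c) (a : ℂ) (k : ℕ) :
    iteratedDeriv k (fun u : ℝ => ((c + u : ℝ) : ℂ) ^ a) 0 =
      (∏ i ∈ range k, (a - i)) * (c : ℂ) ^ (a - k) := by
  rw [iteratedDeriv_comp_const_add k (fun v : ℝ => (v : ℂ) ^ a) c]
  simpa using iteratedDeriv_ofReal_cpow hc a k

end cpow

theorem prod_range_four_mul_add_two_mul_factorial (k : ℕ) :
    (∏ i ∈ range k, (4 * i + 2)) * k ! = (2 * k)! := by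
  induction k with
  | zero => simp
  | succ k ih =>
    rw [prod_range_succ, Nat.factorial_succ, show 2 * (k + 1) = 2 * k + 1 + 1 by ring,
      Nat.factorial_succ, Nat.factorial_succ, ← ih]
    ring

theorem prod_range_four_mul_add_two_mul {K : Type*} [Field K] [CharZero K] (a : K) (j : ℕ) :
    ∏ i ∈ range j, (4 * i + 2 * a) = 2 ^ (2 * j) * ∏ i ∈ range j, (a / 2 + i) := by
  have h := pow_card_mul_prod (s := range j) (b := (2 : K) ^ 2) (f := fun i => a / 2 + i)
  rw [card_range] at h
  rw [pow_mul, h]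
  exact prod_congr rfl fun i _ => by ring

theorem prod_range_sub_eq_prod_range_sub_add {R : Type*} [CommRing R] (a : R) (l : ℕ) :
    ∏ i ∈ range l, (a - i) = ∏ i ∈ range l, (a - l + 1 + i) := by
  rw [← prod_range_reflect]
  refine prod_congr rfl fun i hi => ?_
  have hil : i < l := mem_range.mp hi
  rw [Nat.cast_sub (by omega), Nat.cast_sub (by omega)]
  push_cast
  ring

theorem iteratedDeriv_two_mul_ofReal_const_add_sq_cpow {c : ℝ} (hc : 0 < c) (a : ℂ) (k : ℕ) :
    iteratedDeriv (2 * k) (fun t : ℝ => ((c + t ^ 2 : ℝ) : ℂ) ^ a) 0 =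
      ((2 * k)! / k ! : ℂ) * (∏ i ∈ range k, (a - i)) * (c : ℂ) ^ (a - k) := by
  rw [iteratedDeriv_two_mul_comp_sq_apply_zero isOpen_Ioi
    (Set.Ici_subset_Ioi.2 (neg_lt_zero.2 hc)) (contDiffOn_ofReal_const_add_cpow c a) k,
    iteratedDeriv_ofReal_const_add_cpow hc,
    Complex.real_smul, ← mul_assoc]
  congr 2
  rw [eq_div_iff (Nat.cast_ne_zero.2 k.factorial_ne_zero)]
  exact_mod_cast prod_range_four_mul_add_two_mul_factorial k

theorem stmt_6 (n : ℕ) (hn : 2 ≤ n) (j l : ℕ) (hjl : j ≤ l) (lam : ℂ) :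
    (laplacianC (n - 1))^[j]
        (fun x : EuclideanSpace ℝ (Fin (n - 1)) =>
          iteratedDeriv (2 * l - 2 * j)
            (fun t : ℝ => ((1 + ‖x‖ ^ 2 + t ^ 2 : ℝ) : ℂ) ^ (-lam)) 0) 0 =
      (2 : ℂ) ^ (2 * j) * (((2 * l - 2 * j).factorial : ℂ) / ((l - j).factorial : ℂ)) *
        (∏ i ∈ Finset.range l, (-lam - l + 1 + i)) *
        ∏ i ∈ Finset.range j, (((n : ℂ) - 1) / 2 + i) := by
  obtain ⟨k, rfl⟩ := Nat.exists_eq_add_of_le hjl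
  rw [show 2 * (j + k) - 2 * j = 2 * k by omega, Nat.add_sub_cancel_left]
  set C : ℂ := ((2 * k)! / k ! : ℂ) * ∏ i ∈ range k, (-lam - i)
  have hinner : ∀ x : EuclideanSpace ℝ (Fin (n - 1)),
      iteratedDeriv (2 * k) (fun t : ℝ => ((1 + ‖x‖ ^ 2 + t ^ 2 : ℝ) : ℂ) ^ (-lam)) 0 =
        C * ((1 + ‖x‖ ^ 2 : ℝ) : ℂ) ^ (-lam - k) := fun x =>
    iteratedDeriv_two_mul_ofReal_const_add_sq_cpow (by positivity) _ k
  simp_rw [hinner]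
  rw [laplacianC_iterate_comp_normSq_apply_zero (g := fun u => C * ((1 + u : ℝ) : ℂ) ^ (-lam - k))
    isOpen_Ioi (Set.Ici_subset_Ioi.2 (by norm_num))
    (contDiffOn_const.mul (contDiffOn_ofReal_const_add_cpow 1 _)),
    iteratedDeriv_const_mul_field, iteratedDeriv_ofReal_const_add_cpow one_pos]
  have hlaplace : ((∏ i ∈ range j, (4 * i + 2 * (n - 1 : ℕ) : ℝ) : ℝ) : ℂ) =
      2 ^ (2 * j) * ∏ i ∈ range j, (((n : ℂ) - 1) / 2 + i) := by
    push_cast [Nat.cast_sub (by omega : 1 ≤ n)]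
    exact prod_range_four_mul_add_two_mul _ j
  have hpochhammer : (∏ i ∈ range k, (-lam - i)) * ∏ i ∈ range j, (-lam - k - i) =
      ∏ i ∈ range (j + k), (-lam - (j + k : ℕ) + 1 + i) := by
    rw [← prod_range_sub_eq_prod_range_sub_add, add_comm j k, prod_range_add]
    push_cast
    simp only [sub_sub]
  rw [Complex.ofReal_one, Complex.one_cpow, mul_one, Complex.real_smul, hlaplace, ← hpochhammer]
  ring
end
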